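/- Let d ≥ 0, α ∈ (0,1], and let C : ℝ^d → ℝ^d satisfy ‖C(x) − x‖₂² ≤ (1 − α)·‖x‖₂² for all x ∈ ℝ^d. Let (v_t)_{t≥0} be a sequence in ℝ^d with ‖v_t‖₂² ≤ d for all t, and define (e_t)_{t≥0} by e_0 = 0 and e_{t+1} = v_t + e_t − C(v_t + e_t). Then for every ρ > 0 with (1 − α)(1 + ρ) < 1 and every t ≥ 0: ‖e_t‖₂² ≤ ( (1 − α)·(1 + 1/ρ)·d ) / ( 1 − (1 − α)(1 + ρ) ). -/

import Mathlib

/-!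
Squaring the triangle inequality with Young's inequality `2ab ≤ a²/ρ + ρb²` gives
`‖e_{t+1}‖² ≤ (1-α)‖v_t + e_t‖² ≤ (1-α)(1+1/ρ) d + (1-α)(1+ρ) ‖e_t‖²`, a linear recursion with
contraction factor `(1-α)(1+ρ) < 1`; its fixed point is the claimed bound, and the sublevel set
below the fixed point is invariant, so `e_0 = 0` stays inside it forever.
-/

lemma add_sq_le_of_pos {a b ρ : ℝ} (hρ : 0 < ρ) :
    (a + b) ^ 2 ≤ (1 + 1 / ρ) * a ^ 2 + (1 + ρ) * b ^ 2 := by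
  have hsq : 0 ≤ (a - ρ * b) ^ 2 / ρ := by positivity
  have hexpand : (a - ρ * b) ^ 2 / ρ = 1 / ρ * a ^ 2 + ρ * b ^ 2 - 2 * a * b := by
    field_simp
    ring
  nlinarith

lemma norm_add_sq_le_of_pos {E : Type*} [SeminormedAddGroup E] (x y : E) {ρ : ℝ} (hρ : 0 < ρ) :
    ‖x + y‖ ^ 2 ≤ (1 + 1 / ρ) * ‖x‖ ^ 2 + (1 + ρ) * ‖y‖ ^ 2 :=
  (pow_le_pow_left₀ (norm_nonneg _) (norm_add_le x y) 2).trans (add_sq_le_of_pos hρ)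

lemma le_div_one_sub_of_le_mul_add {u : ℕ → ℝ} {q c : ℝ} (hq₀ : 0 ≤ q) (hq₁ : q < 1)
    (h₀ : u 0 ≤ c / (1 - q)) (hu : ∀ t, u (t + 1) ≤ q * u t + c) (t : ℕ) :
    u t ≤ c / (1 - q) := by
  have hfix : q * (c / (1 - q)) + c = c / (1 - q) := by
    field_simp [(sub_pos.2 hq₁).ne']
    ring
  induction t with
  | zero => exact h₀
  | succ t ih => exact (hu t).trans (hfix ▸ by gcongr)

theorem stmt_11 (d : ℕ) (α : ℝ) (hα : α ∈ Set.Ioc (0 : ℝ) 1)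
    (C : EuclideanSpace ℝ (Fin d) → EuclideanSpace ℝ (Fin d))
    (hC : ∀ x, ‖C x - x‖ ^ 2 ≤ (1 - α) * ‖x‖ ^ 2)
    (v : ℕ → EuclideanSpace ℝ (Fin d)) (hv : ∀ t, ‖v t‖ ^ 2 ≤ (d : ℝ))
    (e : ℕ → EuclideanSpace ℝ (Fin d)) (he0 : e 0 = 0)
    (he : ∀ t, e (t + 1) = v t + e t - C (v t + e t)) :
    ∀ ρ > (0 : ℝ), (1 - α) * (1 + ρ) < 1 → ∀ t,
      ‖e t‖ ^ 2 ≤ (1 - α) * (1 + 1 / ρ) * d / (1 - (1 - α) * (1 + ρ)) := by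
  intro ρ hρ hq₁
  have hβ : 0 ≤ 1 - α := sub_nonneg.2 hα.2
  refine le_div_one_sub_of_le_mul_add (by positivity) hq₁ (by rw [he0, norm_zero, sq, zero_mul]; positivity) fun t ↦ ?_
  calc ‖e (t + 1)‖ ^ 2 = ‖C (v t + e t) - (v t + e t)‖ ^ 2 := by rw [he, ← norm_neg, neg_sub]
    _ ≤ (1 - α) * ‖v t + e t‖ ^ 2 := hC _
    _ ≤ (1 - α) * ((1 + 1 / ρ) * d + (1 + ρ) * ‖e t‖ ^ 2) := by
        gcongr
        exact (norm_add_sq_le_of_pos _ _ hρ).trans (by gcongr; exact hv t)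
    _ = (1 - α) * (1 + ρ) * ‖e t‖ ^ 2 + (1 - α) * (1 + 1 / ρ) * d := by ring
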